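/- arXiv:1605.00625 — 9 statements merged into one kernel-verified Lean document; each statement's English description precedes it below -/
import Mathlib

section
/- Let q ≥ 2 be an integer (so q is not a root of unity) and let r, r', d, d' be nonnegative integers. If q^{-r} + q^{-r-d-1} = q^{-r'} + q^{-r'-d'-1} and q^{-2r-d} = q^{-2r'-d'}, then r = r' and d = d'. -/
/-!
For `Q ≥ 2` and `b ≤ a` we have `Q ^ a < Q ^ a + Q ^ b ≤ 2 * Q ^ a ≤ Q ^ (a + 1)`, so a sum of
two integer powers of `Q` determines its larger exponent, and then the smaller one as well.
-/

section ZPowSum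

variable {K : Type*} [Field K] [LinearOrder K] [IsStrictOrderedRing K] {Q : K}

lemma zpow_add_zpow_le_zpow_add_one (hQ : 2 ≤ Q) {a b : ℤ} (hba : b ≤ a) :
    Q ^ a + Q ^ b ≤ Q ^ (a + 1) := by
  have hQ1 : 1 ≤ Q := by linarith
  have hpos : 0 < Q ^ a := zpow_pos (by linarith) a
  calc Q ^ a + Q ^ b ≤ Q ^ a + Q ^ a := add_le_add_right (zpow_le_zpow_right₀ hQ1 hba) _
    _ = 2 * Q ^ a := (two_mul _).symm
    _ ≤ Q * Q ^ a := mul_le_mul_of_nonneg_right hQ hpos.le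
    _ = Q ^ (a + 1) := by rw [zpow_add_one₀ (by positivity), mul_comm]

lemma le_of_zpow_add_zpow_eq (hQ : 2 ≤ Q) {a b u v : ℤ} (hvu : v ≤ u)
    (h : Q ^ a + Q ^ b = Q ^ u + Q ^ v) : a ≤ u := by
  by_contra! hua
  have hQ1 : 1 ≤ Q := by linarith
  have : Q ^ a < Q ^ a + Q ^ b := lt_add_of_pos_right _ (zpow_pos (by linarith) b)
  have : Q ^ (u + 1) ≤ Q ^ a := zpow_le_zpow_right₀ hQ1 hua
  have := zpow_add_zpow_le_zpow_add_one hQ hvu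
  linarith

lemma zpow_add_zpow_inj (hQ : 2 ≤ Q) {a b u v : ℤ} (hba : b ≤ a) (hvu : v ≤ u)
    (h : Q ^ a + Q ^ b = Q ^ u + Q ^ v) : a = u ∧ b = v := by
  obtain rfl : a = u :=
    (le_of_zpow_add_zpow_eq hQ hvu h).antisymm (le_of_zpow_add_zpow_eq hQ hba h.symm)
  exact ⟨rfl, zpow_right_injective₀ (by linarith) (by linarith) (add_left_cancel h)⟩

end ZPowSum

theorem stmt_0_general (q : ℕ) (hq : 2 ≤ q) (r d r' d' : ℕ)
    (h1 : (q : ℝ) ^ (-(r : ℤ)) + (q : ℝ) ^ (-(r : ℤ) - (d : ℤ) - 1)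
        = (q : ℝ) ^ (-(r' : ℤ)) + (q : ℝ) ^ (-(r' : ℤ) - (d' : ℤ) - 1)) :
    r = r' ∧ d = d' := by
  have hQ : (2 : ℝ) ≤ q := by exact_mod_cast hq
  have := zpow_add_zpow_inj hQ (by omega) (by omega) h1
  omega

theorem stmt_0 (q : ℕ) (hq : 2 ≤ q) (r d r' d' : ℕ)
    (h1 : (q : ℝ) ^ (-(r : ℤ)) + (q : ℝ) ^ (-(r : ℤ) - (d : ℤ) - 1)
        = (q : ℝ) ^ (-(r' : ℤ)) + (q : ℝ) ^ (-(r' : ℤ) - (d' : ℤ) - 1))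
    (h2 : (q : ℝ) ^ (-2 * (r : ℤ) - (d : ℤ)) = (q : ℝ) ^ (-2 * (r' : ℤ) - (d' : ℤ))) :
    r = r' ∧ d = d' :=
  stmt_0_general q hq r d r' d' h1
end

section
/- Let R, L, K be elements of an associative algebra over ℂ with K invertible, satisfying RK = qKR, LK = q⁻¹KL, q(q+1)⁻¹RL² − LRL + (q+1)⁻¹L²R + LK = 0, and q(q+1)⁻¹R²L − RLR + (q+1)⁻¹LR² + KR = 0, where q is a nonzero scalar with q, q², q³ ≠ 1. Set τ = q^{1/2} (a fixed square root of q). Then R and L satisfy the cubic q^{1/2}-Serre relations: R³L − [3]_τ R²LR + [3]_τ RLR² − LR³ = 0 and L³R − [3]_τ L²RL + [3]_τ LRL² − RL³ = 0, where [3]_τ = (τ³ − τ⁻³)/(τ − τ⁻¹) = τ² + 1 + τ⁻². -/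
/-!
Write `X = q/(q+1) R²L − RLR + 1/(q+1) LR² + KR` for the left side of the second relation. Since
`RK = qKR`, the `K`-terms cancel in the `q`-commutator `RX − qXR`, which is `q/(q+1)` times the
cubic Serre expression in `R, L`; so `X = 0` forces the Serre relation for `R`. Read in the
opposite algebra, the first relation and `LK = q⁻¹KL` take exactly the same shape with `L` in the
role of `R`, which gives the Serre relation for `L`.
-/

section QSerre

variable {k A : Type*} [Field k] [Ring A] [Algebra k A]

def qSerre (c : k) (x y : A) : A :=
  x * x * x * y - c • (x * x * y * x) + c • (x * y * x * x) - y * x * x * x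

theorem qSerre_op (c : k) (x y : A) :
    qSerre c (MulOpposite.op x) (MulOpposite.op y) = -MulOpposite.op (qSerre c x y) := by
  apply MulOpposite.unop_injective
  simp only [qSerre, MulOpposite.unop_add, MulOpposite.unop_sub, MulOpposite.unop_smul,
    MulOpposite.unop_mul, MulOpposite.unop_op, MulOpposite.unop_neg]
  noncomm_ring

variable {q : k}

theorem qCommutator_relation_eq_smul_qSerre (hq0 : q ≠ 0) (hq1 : q + 1 ≠ 0) {R L K : A}
    (hRK : R * K = q • (K * R)) :
    R * ((q * (q + 1)⁻¹) • (R * R * L) - R * L * R + (q + 1)⁻¹ • (L * R * R) + K * R)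
      - q • (((q * (q + 1)⁻¹) • (R * R * L) - R * L * R + (q + 1)⁻¹ • (L * R * R) + K * R) * R)
      = (q * (q + 1)⁻¹) • qSerre (q + 1 + q⁻¹) R L := by
  have hKRR : R * (K * R) = q • (K * R * R) := by rw [← mul_assoc, hRK, smul_mul_assoc]
  simp only [qSerre, mul_add, mul_sub, add_mul, sub_mul, mul_smul_comm, smul_mul_assoc, hKRR,
    ← mul_assoc]
  match_scalars <;> field_simp <;> ring

theorem qSerre_eq_zero_of_relation (hq0 : q ≠ 0) (hq1 : q + 1 ≠ 0) {R L K : A}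
    (hRK : R * K = q • (K * R))
    (h : (q * (q + 1)⁻¹) • (R * R * L) - R * L * R + (q + 1)⁻¹ • (L * R * R) + K * R = 0) :
    qSerre (q + 1 + q⁻¹) R L = 0 := by
  have key := qCommutator_relation_eq_smul_qSerre (L := L) hq0 hq1 hRK
  rw [h, mul_zero, zero_mul, smul_zero, sub_zero, eq_comm] at key
  exact (smul_eq_zero.mp key).resolve_left (mul_ne_zero hq0 (inv_ne_zero hq1))

theorem qSerre_eq_zero_of_relation_right (hq0 : q ≠ 0) (hq1 : q + 1 ≠ 0) {R L K : A}
    (hLK : L * K = q⁻¹ • (K * L))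
    (h : (q * (q + 1)⁻¹) • (R * L * L) - L * R * L + (q + 1)⁻¹ • (L * L * R) + L * K = 0) :
    qSerre (q + 1 + q⁻¹) L R = 0 := by
  open MulOpposite in
  have hLK_op : op L * op K = q • (op K * op L) := by
    rw [← op_mul, ← op_mul, ← op_smul, hLK, smul_smul, mul_inv_cancel₀ hq0, one_smul]
  open MulOpposite in
  have h_op : (q * (q + 1)⁻¹) • (op L * op L * op R) - op L * op R * op L
      + (q + 1)⁻¹ • (op R * op L * op L) + op K * op L = 0 := by
    apply_fun op at h
    simpa only [op_add, op_sub, op_smul, op_mul, op_zero, mul_assoc] using h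
  simpa [qSerre_op] using qSerre_eq_zero_of_relation hq0 hq1 hLK_op h_op

end QSerre

theorem stmt_2_general (A : Type*) [Ring A] [Algebra ℂ A] (q τ : ℂ)
    (hq0 : q ≠ 0) (hq2 : q ^ 2 ≠ 1)
    (hτ : τ ^ 2 = q)
    (R L K : A)
    (h1 : R * K = q • (K * R))
    (h2 : L * K = q⁻¹ • (K * L))
    (h3 : (q * (q + 1)⁻¹) • (R * L * L) - L * R * L + (q + 1)⁻¹ • (L * L * R) + L * K = 0)
    (h4 : (q * (q + 1)⁻¹) • (R * R * L) - R * L * R + (q + 1)⁻¹ • (L * R * R) + K * R = 0) :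
    R * R * R * L - (τ ^ 2 + 1 + (τ⁻¹) ^ 2) • (R * R * L * R)
      + (τ ^ 2 + 1 + (τ⁻¹) ^ 2) • (R * L * R * R) - L * R * R * R = 0
    ∧ L * L * L * R - (τ ^ 2 + 1 + (τ⁻¹) ^ 2) • (L * L * R * L)
      + (τ ^ 2 + 1 + (τ⁻¹) ^ 2) • (L * R * L * L) - R * L * L * L = 0 := by
  have hq1 : q + 1 ≠ 0 := fun h => hq2 (by rw [eq_neg_of_add_eq_zero_left h]; norm_num)
  have hc : τ ^ 2 + 1 + (τ⁻¹) ^ 2 = q + 1 + q⁻¹ := by rw [inv_pow, hτ]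
  rw [hc]
  exact ⟨qSerre_eq_zero_of_relation hq0 hq1 h1 h4, qSerre_eq_zero_of_relation_right hq0 hq1 h2 h3⟩

theorem stmt_2 (A : Type*) [Ring A] [Algebra ℂ A] (q τ : ℂ)
    (hq0 : q ≠ 0) (hq1 : q ≠ 1) (hq2 : q ^ 2 ≠ 1) (hq3 : q ^ 3 ≠ 1)
    (hτ : τ ^ 2 = q)
    (R L K : A) (hK : IsUnit K)
    (h1 : R * K = q • (K * R))
    (h2 : L * K = q⁻¹ • (K * L))
    (h3 : (q * (q + 1)⁻¹) • (R * L * L) - L * R * L + (q + 1)⁻¹ • (L * L * R) + L * K = 0)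
    (h4 : (q * (q + 1)⁻¹) • (R * R * L) - R * L * R + (q + 1)⁻¹ • (L * R * R) + K * R = 0) :
    R * R * R * L - (τ ^ 2 + 1 + (τ⁻¹) ^ 2) • (R * R * L * R)
      + (τ ^ 2 + 1 + (τ⁻¹) ^ 2) • (R * L * R * R) - L * R * R * R = 0
    ∧ L * L * L * R - (τ ^ 2 + 1 + (τ⁻¹) ^ 2) • (L * L * R * L)
      + (τ ^ 2 + 1 + (τ⁻¹) ^ 2) • (L * R * L * L) - R * L * L * L = 0 :=
  stmt_2_general A q τ hq0 hq2 hτ R L K h1 h2 h3 h4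
end

section
/- Let R, L, K be elements of an associative algebra over ℂ with K invertible, satisfying RK = qKR, LK = q⁻¹KL, q(q+1)⁻¹RL² − LRL + (q+1)⁻¹L²R + LK = 0, and q(q+1)⁻¹R²L − RLR + (q+1)⁻¹LR² + KR = 0, where q is a nonzero scalar with q ≠ ±1. Then the elements RL, LR, K, K⁻¹ mutually commute. -/
/-!
Since `R` and `L` scale `K` by inverse factors `q` and `q⁻¹`, both `RL` and `LR` commute with `K`,
hence with `K⁻¹`. Multiplying the first cubic relation by `R` on the left and the second by `L`
on the right and subtracting, the quartic terms cancel except `(q + 1)⁻¹ [RL, LR]`, and what is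
left is `[RL, K] = 0`.
-/

section

variable {k A : Type*}

theorem Commute.mul_of_smul_commute [CommSemiring k] [Semiring A] [Algebra k A]
    {X Y K : A} {a b : k} (hab : a * b = 1)
    (hX : X * K = a • (K * X)) (hY : Y * K = b • (K * Y)) : Commute (X * Y) K := by
  calc X * Y * K = b • (X * K * Y) := by rw [mul_assoc, hY, mul_smul_comm, mul_assoc]
    _ = K * (X * Y) := by
      rw [hX, smul_mul_assoc, smul_smul, mul_comm, hab, one_smul, mul_assoc]

theorem smul_commutator_eq_of_cubic_relations [CommRing k] [Ring A] [Algebra k A]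
    {R L K : A} {a c : k}
    (hL : a • (R * L * L) - L * R * L + c • (L * L * R) + L * K = 0)
    (hR : a • (R * R * L) - R * L * R + c • (L * R * R) + K * R = 0) :
    c • (R * L * (L * R) - L * R * (R * L)) = K * (R * L) - R * L * K := by
  have : R * (a • (R * L * L) - L * R * L + c • (L * L * R) + L * K)
      - (a • (R * R * L) - R * L * R + c • (L * R * R) + K * R) * L
      = c • (R * L * (L * R)) - c • (L * R * (R * L)) - (K * (R * L) - R * L * K) := by
    noncomm_ring
  rwa [hL, hR, mul_zero, zero_mul, sub_zero, eq_comm, sub_eq_zero, ← smul_sub] at this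

theorem Commute.of_cubic_relations [Field k] [Ring A] [Algebra k A]
    {R L K : A} {a c : k} (hc : c ≠ 0)
    (hL : a • (R * L * L) - L * R * L + c • (L * L * R) + L * K = 0)
    (hR : a • (R * R * L) - R * L * R + c • (L * R * R) + K * R = 0)
    (hK : Commute (R * L) K) : Commute (R * L) (L * R) := by
  have h := smul_commutator_eq_of_cubic_relations hL hR
  rw [hK.eq, sub_self, smul_eq_zero, sub_eq_zero] at h
  exact h.resolve_left hc

end

theorem stmt_3_general (A : Type*) [Ring A] [Algebra ℂ A] (q : ℂ)
    (hq0 : q ≠ 0) (hq1' : q ≠ -1)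
    (R L K Ki : A) (hK : K * Ki = 1) (hK' : Ki * K = 1)
    (h1 : R * K = q • (K * R))
    (h2 : L * K = q⁻¹ • (K * L))
    (h3 : (q * (q + 1)⁻¹) • (R * L * L) - L * R * L + (q + 1)⁻¹ • (L * L * R) + L * K = 0)
    (h4 : (q * (q + 1)⁻¹) • (R * R * L) - R * L * R + (q + 1)⁻¹ • (L * R * R) + K * R = 0) :
    Commute (R * L) (L * R) ∧ Commute (R * L) K ∧ Commute (R * L) Ki ∧
    Commute (L * R) K ∧ Commute (L * R) Ki ∧ Commute K Ki := by
  let u : Aˣ := ⟨K, Ki, hK, hK'⟩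
  have hRL : Commute (R * L) K := .mul_of_smul_commute (mul_inv_cancel₀ hq0) h1 h2
  have hLR : Commute (L * R) K := .mul_of_smul_commute (inv_mul_cancel₀ hq0) h2 h1
  have hc : (q + 1)⁻¹ ≠ 0 := inv_ne_zero fun h => hq1' (eq_neg_of_add_eq_zero_left h)
  exact ⟨.of_cubic_relations hc h3 h4 hRL, hRL, hRL.units_inv_right (u := u), hLR,
    hLR.units_inv_right (u := u), hK.trans hK'.symm⟩

theorem stmt_3 (A : Type*) [Ring A] [Algebra ℂ A] (q : ℂ)
    (hq0 : q ≠ 0) (hq1 : q ≠ 1) (hq1' : q ≠ -1)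
    (R L K Ki : A) (hK : K * Ki = 1) (hK' : Ki * K = 1)
    (h1 : R * K = q • (K * R))
    (h2 : L * K = q⁻¹ • (K * L))
    (h3 : (q * (q + 1)⁻¹) • (R * L * L) - L * R * L + (q + 1)⁻¹ • (L * L * R) + L * K = 0)
    (h4 : (q * (q + 1)⁻¹) • (R * R * L) - R * L * R + (q + 1)⁻¹ • (L * R * R) + K * R = 0) :
    Commute (R * L) (L * R) ∧ Commute (R * L) K ∧ Commute (R * L) Ki ∧
    Commute (L * R) K ∧ Commute (L * R) Ki ∧ Commute K Ki :=
  stmt_3_general A q hq0 hq1' R L K Ki hK hK' h1 h2 h3 h4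
end

section
/- Let R, L, K be elements of an associative algebra over ℂ with K invertible, satisfying RK = qKR, LK = q⁻¹KL, q(q+1)⁻¹RL² − LRL + (q+1)⁻¹L²R + LK = 0, and q(q+1)⁻¹R²L − RLR + (q+1)⁻¹LR² + KR = 0, where q ≠ 0, ±1. Define C₁ = q⁻¹(q−1)⁻¹(q+1)K + RL − q⁻¹LR and C₂ = K² + (q−1)RLK − (q−1)LRK. Then C₁ commutes with each of R, L, K, and C₂ commutes with each of R, L, K. -/
/-!
Both relations `R K = q K R` and `L K = q⁻¹ K L` make `R L` and `L R` commute with `K`, hence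
`C₁` and `C₂` commute with `K`. Moving `R` (resp. `L`) across `C₁` or `C₂` with the same two
relations, the commutator comes out as a scalar multiple (for `C₂`, `K` times a scalar multiple)
of the left-hand side of the cubic relation quadratic in `R` (resp. `L`), which vanishes.
-/

section Casimir

variable {k A : Type*} [Field k] [Ring A] [Algebra k A]

theorem commute_mul_of_mul_eq_smul_mul {a b K : A} {c d : k}
    (ha : a * K = c • (K * a)) (hb : b * K = d • (K * b)) (hcd : c * d = 1) :
    Commute (a * b) K := by
  calc a * b * K = a * (d • (K * b)) := by rw [mul_assoc, hb]
    _ = (d * c) • (K * (a * b)) := by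
        rw [mul_smul_comm, ← mul_assoc, ha, smul_mul_assoc, smul_smul, mul_assoc]
    _ = K * (a * b) := by rw [mul_comm d, hcd, one_smul]

theorem mul_mul_eq_smul_mul_mul {a K : A} {c : k} (ha : a * K = c • (K * a))
    (X : A) : a * (K * X) = c • (K * (a * X)) := by
  rw [← mul_assoc, ha, smul_mul_assoc, mul_assoc]

def cubicRelL (q : k) (R L K : A) : A :=
  (q * (q + 1)⁻¹) • (R * L * L) - L * R * L + (q + 1)⁻¹ • (L * L * R) + L * K

def cubicRelR (q : k) (R L K : A) : A :=
  (q * (q + 1)⁻¹) • (R * R * L) - R * L * R + (q + 1)⁻¹ • (L * R * R) + K * R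

def casimir₁ (q : k) (R L K : A) : A :=
  (q⁻¹ * (q - 1)⁻¹ * (q + 1)) • K + R * L - q⁻¹ • (L * R)

def casimir₂ (q : k) (R L K : A) : A :=
  K * K + (q - 1) • (R * L * K) - (q - 1) • (L * R * K)

variable {q : k} {R L K : A}

theorem casimir₁_mul_sub_mul_R (hq0 : q ≠ 0) (hq1 : q ≠ 1) (hq1' : q ≠ -1)
    (hRK : R * K = q • (K * R)) :
    casimir₁ q R L K * R - R * casimir₁ q R L K = (-(q + 1) / q) • cubicRelR q R L K := by
  have hq1n : q - 1 ≠ 0 := sub_ne_zero.mpr hq1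
  have hq1p : q + 1 ≠ 0 := by rwa [Ne, add_eq_zero_iff_eq_neg]
  simp only [casimir₁, cubicRelR, add_mul, mul_add, sub_mul, mul_sub, smul_mul_assoc,
    mul_smul_comm, smul_add, smul_sub, smul_smul, mul_assoc, hRK]
  match_scalars <;> field_simp <;> ring

theorem casimir₁_mul_sub_mul_L (hq0 : q ≠ 0) (hq1 : q ≠ 1) (hq1' : q ≠ -1)
    (hLK : L * K = q⁻¹ • (K * L)) :
    casimir₁ q R L K * L - L * casimir₁ q R L K = ((q + 1) / q) • cubicRelL q R L K := by
  have hq1n : q - 1 ≠ 0 := sub_ne_zero.mpr hq1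
  have hq1p : q + 1 ≠ 0 := by rwa [Ne, add_eq_zero_iff_eq_neg]
  simp only [casimir₁, cubicRelL, add_mul, mul_add, sub_mul, mul_sub, smul_mul_assoc,
    mul_smul_comm, smul_add, smul_sub, smul_smul, mul_assoc, hLK]
  match_scalars <;> field_simp
  ring

theorem casimir₂_mul_sub_mul_R (hq0 : q ≠ 0) (hq1' : q ≠ -1)
    (hRK : R * K = q • (K * R)) (hLK : L * K = q⁻¹ • (K * L)) :
    casimir₂ q R L K * R - R * casimir₂ q R L K = (-(q * q - 1)) • (K * cubicRelR q R L K) := by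
  have hR := mul_mul_eq_smul_mul_mul hRK
  have hL := mul_mul_eq_smul_mul_mul hLK
  have hq1p : q + 1 ≠ 0 := by rwa [Ne, add_eq_zero_iff_eq_neg]
  simp only [casimir₂, cubicRelR, add_mul, mul_add, sub_mul, mul_sub, smul_mul_assoc,
    mul_smul_comm, smul_add, smul_sub, smul_smul, mul_assoc, hRK, hLK, hR, hL]
  match_scalars <;> field_simp <;> ring

theorem casimir₂_mul_sub_mul_L (hq0 : q ≠ 0) (hq1' : q ≠ -1)
    (hRK : R * K = q • (K * R)) (hLK : L * K = q⁻¹ • (K * L)) :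
    casimir₂ q R L K * L - L * casimir₂ q R L K =
      ((q - 1) * (q + 1) / q) • (K * cubicRelL q R L K) := by
  have hR := mul_mul_eq_smul_mul_mul hRK
  have hL := mul_mul_eq_smul_mul_mul hLK
  have hq1p : q + 1 ≠ 0 := by rwa [Ne, add_eq_zero_iff_eq_neg]
  simp only [casimir₂, cubicRelL, add_mul, mul_add, sub_mul, mul_sub, smul_mul_assoc,
    mul_smul_comm, smul_add, smul_sub, smul_smul, mul_assoc, hRK, hLK, hR, hL]
  match_scalars <;> field_simp <;> ring

theorem commute_casimir₁_K (hq0 : q ≠ 0) (hRK : R * K = q • (K * R))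
    (hLK : L * K = q⁻¹ • (K * L)) : Commute (casimir₁ q R L K) K :=
  have hRL : Commute (R * L) K := commute_mul_of_mul_eq_smul_mul hRK hLK (mul_inv_cancel₀ hq0)
  have hLR : Commute (L * R) K := commute_mul_of_mul_eq_smul_mul hLK hRK (inv_mul_cancel₀ hq0)
  (((Commute.refl K).smul_left _).add_left hRL).sub_left (hLR.smul_left _)

theorem commute_casimir₂_K (hq0 : q ≠ 0) (hRK : R * K = q • (K * R))
    (hLK : L * K = q⁻¹ • (K * L)) : Commute (casimir₂ q R L K) K :=
  have hRL : Commute (R * L) K := commute_mul_of_mul_eq_smul_mul hRK hLK (mul_inv_cancel₀ hq0)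
  have hLR : Commute (L * R) K := commute_mul_of_mul_eq_smul_mul hLK hRK (inv_mul_cancel₀ hq0)
  have hK := Commute.refl K
  ((hK.mul_left hK).add_left ((hRL.mul_left hK).smul_left _)).sub_left
    ((hLR.mul_left hK).smul_left _)

end Casimir

theorem stmt_4_general (A : Type*) [Ring A] [Algebra ℂ A] (q : ℂ)
    (hq0 : q ≠ 0) (hq1 : q ≠ 1) (hq1' : q ≠ -1)
    (R L K : A)
    (h1 : R * K = q • (K * R))
    (h2 : L * K = q⁻¹ • (K * L))
    (h3 : (q * (q + 1)⁻¹) • (R * L * L) - L * R * L + (q + 1)⁻¹ • (L * L * R) + L * K = 0)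
    (h4 : (q * (q + 1)⁻¹) • (R * R * L) - R * L * R + (q + 1)⁻¹ • (L * R * R) + K * R = 0)
    (C₁ C₂ : A)
    (hC₁ : C₁ = (q⁻¹ * (q - 1)⁻¹ * (q + 1)) • K + R * L - q⁻¹ • (L * R))
    (hC₂ : C₂ = K * K + (q - 1) • (R * L * K) - (q - 1) • (L * R * K)) :
    (Commute C₁ R ∧ Commute C₁ L ∧ Commute C₁ K) ∧
    (Commute C₂ R ∧ Commute C₂ L ∧ Commute C₂ K) := by
  change cubicRelL q R L K = 0 at h3
  change cubicRelR q R L K = 0 at h4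
  change C₁ = casimir₁ q R L K at hC₁
  change C₂ = casimir₂ q R L K at hC₂
  subst hC₁ hC₂
  refine ⟨⟨?_, ?_, commute_casimir₁_K hq0 h1 h2⟩, ⟨?_, ?_, commute_casimir₂_K hq0 h1 h2⟩⟩
  all_goals refine sub_eq_zero.mp ?_
  · rw [casimir₁_mul_sub_mul_R hq0 hq1 hq1' h1, h4, smul_zero]
  · rw [casimir₁_mul_sub_mul_L hq0 hq1 hq1' h2, h3, smul_zero]
  · rw [casimir₂_mul_sub_mul_R hq0 hq1' h1 h2, h4, mul_zero, smul_zero]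
  · rw [casimir₂_mul_sub_mul_L hq0 hq1' h1 h2, h3, mul_zero, smul_zero]

theorem stmt_4 (A : Type*) [Ring A] [Algebra ℂ A] (q : ℂ)
    (hq0 : q ≠ 0) (hq1 : q ≠ 1) (hq1' : q ≠ -1)
    (R L K : A) (hK : IsUnit K)
    (h1 : R * K = q • (K * R))
    (h2 : L * K = q⁻¹ • (K * L))
    (h3 : (q * (q + 1)⁻¹) • (R * L * L) - L * R * L + (q + 1)⁻¹ • (L * L * R) + L * K = 0)
    (h4 : (q * (q + 1)⁻¹) • (R * R * L) - R * L * R + (q + 1)⁻¹ • (L * R * R) + K * R = 0)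
    (C₁ C₂ : A)
    (hC₁ : C₁ = (q⁻¹ * (q - 1)⁻¹ * (q + 1)) • K + R * L - q⁻¹ • (L * R))
    (hC₂ : C₂ = K * K + (q - 1) • (R * L * K) - (q - 1) • (L * R * K)) :
    (Commute C₁ R ∧ Commute C₁ L ∧ Commute C₁ K) ∧
    (Commute C₂ R ∧ Commute C₂ L ∧ Commute C₂ K) :=
  stmt_4_general A q hq0 hq1 hq1' R L K h1 h2 h3 h4 C₁ C₂ hC₁ hC₂
end

section
/- Let d ≥ 0, let q be a nonzero scalar not a root of unity, let r, N, M be integers, and let W be a complex vector space with basis w₀, …, w_d. Define operators R, L, K on W by: R w_i = w_{i+1} for 0 ≤ i ≤ d−1, R w_d = 0; L w_i = x_{r+i} w_{i−1} for 1 ≤ i ≤ d with x_{r+i} = q^{N+M−r−d}(q^i − 1)(q^{d+1−i} − 1)/(q−1)², L w₀ = 0; K w_i = q^{N+M−r−i} w_i. Then the operators C₁ = q⁻¹(q−1)⁻¹(q+1)K + RL − q⁻¹LR and C₂ = K² + (q−1)RLK − (q−1)LRK act on W as the scalars (q−1)⁻¹ q^{N+M−r}(1 + q^{−d−1}) and q^{2N+2M−2r−d}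 respectively. -/
/-!
On each basis vector `w i` the operators `K`, `R L` and `L R` act diagonally, with eigenvalues
`e t`, `x i` and `x (i + 1)`, where `e = q ^ (N + M - r - d)`, `s = q ^ i`, `t = q ^ (d - i)` and
`x` is the lowering coefficient. Since `x` vanishes at `0` and at `d + 1`, no end case is special,
and the eigenvalues of `C₁` and `C₂` on `w i` are rational functions of `q, e, s, t` that collapse
to expressions in `e` and `s t = q ^ d` alone.
-/

section RaisingLowering

variable {𝕜 V : Type*} [Semiring 𝕜] [AddCommMonoid V] [Module 𝕜 V]
  {d : ℕ} {w : ℕ → V} {R L : Module.End 𝕜 V} {x : ℕ → 𝕜}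

theorem raise_lower_apply (hR : ∀ i < d, R (w i) = w (i + 1))
    (hL : ∀ i, 1 ≤ i → i ≤ d → L (w i) = x i • w (i - 1)) (hL0 : L (w 0) = 0) (hx0 : x 0 = 0)
    {i : ℕ} (hi : i ≤ d) : R (L (w i)) = x i • w i := by
  cases i with
  | zero => simp [hL0, hx0]
  | succ j => rw [hL (j + 1) (by omega) hi, map_smul, Nat.add_sub_cancel, hR j (by omega)]

theorem lower_raise_apply (hR : ∀ i < d, R (w i) = w (i + 1)) (hRd : R (w d) = 0)
    (hL : ∀ i, 1 ≤ i → i ≤ d → L (w i) = x i • w (i - 1)) (hxd : x (d + 1) = 0)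
    {i : ℕ} (hi : i ≤ d) : L (R (w i)) = x (i + 1) • w i := by
  rcases hi.lt_or_eq with hi | rfl
  · rw [hR i hi, hL (i + 1) (by omega) hi, Nat.add_sub_cancel]
  · simp [hRd, hxd]

end RaisingLowering

section AttenuatedSpace

variable {𝕜 : Type*} [Field 𝕜]

/-- The coefficient `x_{r+i}` of the lowering map, with `e = q ^ (N + M - r - d)`. -/
def attenuatedCoeff (q e : 𝕜) (d i : ℕ) : 𝕜 :=
  e * (q ^ i - 1) * (q ^ (d + 1 - i) - 1) * ((q - 1) ^ 2)⁻¹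

theorem attenuatedCoeff_zero (q e : 𝕜) (d : ℕ) : attenuatedCoeff q e d 0 = 0 := by
  simp [attenuatedCoeff]

theorem attenuatedCoeff_succ_self (q e : 𝕜) (d : ℕ) : attenuatedCoeff q e d (d + 1) = 0 := by
  simp [attenuatedCoeff]

theorem attenuatedCoeff_eq {q : 𝕜} (e : 𝕜) {d i : ℕ} (hi : i ≤ d) :
    attenuatedCoeff q e d i = e * (q ^ i - 1) * (q * q ^ (d - i) - 1) * ((q - 1) ^ 2)⁻¹ := by
  rw [attenuatedCoeff, show d + 1 - i = d - i + 1 by omega, pow_succ']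

theorem attenuatedCoeff_succ_eq {q : 𝕜} (e : 𝕜) {d i : ℕ} :
    attenuatedCoeff q e d (i + 1) = e * (q * q ^ i - 1) * (q ^ (d - i) - 1) * ((q - 1) ^ 2)⁻¹ := by
  rw [attenuatedCoeff, Nat.add_sub_add_right, pow_succ']

theorem zpow_sub_natCast_eq_mul {q : 𝕜} (hq0 : q ≠ 0) (n : ℤ) {d i : ℕ} (hi : i ≤ d) :
    q ^ (n - i) = q ^ (n - d) * q ^ (d - i) := by
  rw [← zpow_natCast q (d - i), ← zpow_add₀ hq0, Nat.cast_sub hi]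
  ring_nf

theorem zpow_eq_mul_pow {q : 𝕜} (hq0 : q ≠ 0) (n : ℤ) (d : ℕ) :
    q ^ n = q ^ (n - d) * q ^ d := by
  rw [← zpow_natCast, ← zpow_add₀ hq0, sub_add_cancel]

theorem casimir_one_eigenvalue {q : 𝕜} (hq0 : q ≠ 0) (hq1 : q ≠ 1) (n : ℤ) {d i : ℕ}
    (hi : i ≤ d) :
    q⁻¹ * (q - 1)⁻¹ * (q + 1) * q ^ (n - i) + attenuatedCoeff q (q ^ (n - d)) d i
        - q⁻¹ * attenuatedCoeff q (q ^ (n - d)) d (i + 1)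
      = (q - 1)⁻¹ * q ^ n * (1 + q ^ (-(d : ℤ) - 1)) := by
  have hneg : q ^ (-(d : ℤ) - 1) = (q * q ^ d)⁻¹ := by
    rw [← pow_succ', ← zpow_natCast, ← zpow_neg]; push_cast; ring_nf
  have hq1' : q - 1 ≠ 0 := sub_ne_zero.mpr hq1
  rw [zpow_sub_natCast_eq_mul hq0 n hi, zpow_eq_mul_pow hq0 n d, hneg, ← pow_mul_pow_sub q hi,
    attenuatedCoeff_eq _ hi, attenuatedCoeff_succ_eq]
  field_simp
  ring

theorem casimir_two_eigenvalue {q : 𝕜} (hq0 : q ≠ 0) (hq1 : q ≠ 1) (n : ℤ) {d i : ℕ}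
    (hi : i ≤ d) :
    q ^ (n - i) * q ^ (n - i) + (q - 1) * (attenuatedCoeff q (q ^ (n - d)) d i * q ^ (n - i))
        - (q - 1) * (attenuatedCoeff q (q ^ (n - d)) d (i + 1) * q ^ (n - i))
      = q ^ (2 * n - d) := by
  have h2n : q ^ (2 * n - d) = q ^ (n - d) * q ^ (n - d) * q ^ d := by
    rw [← zpow_natCast q d, ← zpow_add₀ hq0, ← zpow_add₀ hq0]; ring_nf
  have hq1' : q - 1 ≠ 0 := sub_ne_zero.mpr hq1
  rw [zpow_sub_natCast_eq_mul hq0 n hi, h2n, ← pow_mul_pow_sub q hi,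
    attenuatedCoeff_eq _ hi, attenuatedCoeff_succ_eq]
  field_simp
  ring

end AttenuatedSpace

theorem stmt_6 (d : ℕ) (q : ℂ) (hq0 : q ≠ 0) (hq : ∀ n : ℕ, 0 < n → q ^ n ≠ 1)
    (r N M : ℤ) (V : Type*) [AddCommGroup V] [Module ℂ V] (w : ℕ → V)
    (hspan : Submodule.span ℂ (w '' {i | i ≤ d}) = ⊤)
    (R L K : Module.End ℂ V)
    (hR : ∀ i < d, R (w i) = w (i + 1)) (hRd : R (w d) = 0)
    (hL : ∀ i, 1 ≤ i → i ≤ d →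
      L (w i) = (q ^ (N + M - r - (d : ℤ)) * (q ^ i - 1) * (q ^ (d + 1 - i) - 1)
        * (((q - 1) ^ 2)⁻¹)) • w (i - 1))
    (hL0 : L (w 0) = 0)
    (hK : ∀ i ≤ d, K (w i) = (q ^ (N + M - r - (i : ℤ))) • w i) :
    ∀ v : V,
      ((q⁻¹ * (q - 1)⁻¹ * (q + 1)) • K + R * L - q⁻¹ • (L * R)) v
        = ((q - 1)⁻¹ * q ^ (N + M - r) * (1 + q ^ (-(d : ℤ) - 1))) • v
      ∧ (K * K + (q - 1) • (R * L * K) - (q - 1) • (L * R * K)) v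
        = (q ^ (2 * N + 2 * M - 2 * r - (d : ℤ))) • v := by
  have hq1 : q ≠ 1 := by simpa using hq 1 one_pos
  have hL' : ∀ i, 1 ≤ i → i ≤ d →
      L (w i) = attenuatedCoeff q (q ^ (N + M - r - (d : ℤ))) d i • w (i - 1) := hL
  have hRL (i : ℕ) (hi : i ≤ d) := raise_lower_apply hR hL' hL0 (attenuatedCoeff_zero _ _ _) hi
  have hLR (i : ℕ) (hi : i ≤ d) := lower_raise_apply hR hRd hL' (attenuatedCoeff_succ_self _ _ _) hi
  have hC₁ : (q⁻¹ * (q - 1)⁻¹ * (q + 1)) • K + R * L - q⁻¹ • (L * R)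
      = ((q - 1)⁻¹ * q ^ (N + M - r) * (1 + q ^ (-(d : ℤ) - 1))) • 1 := by
    refine LinearMap.ext_on hspan ?_
    rintro _ ⟨i, hi, rfl⟩
    simp only [LinearMap.sub_apply, LinearMap.add_apply, LinearMap.smul_apply,
      Module.End.mul_apply, Module.End.one_apply, hK i hi, hRL i hi, hLR i hi]
    rw [← casimir_one_eigenvalue hq0 hq1 (N + M - r) hi]
    module
  have hC₂ : K * K + (q - 1) • (R * L * K) - (q - 1) • (L * R * K)
      = (q ^ (2 * N + 2 * M - 2 * r - (d : ℤ))) • 1 := by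
    refine LinearMap.ext_on hspan ?_
    rintro _ ⟨i, hi, rfl⟩
    simp only [LinearMap.sub_apply, LinearMap.add_apply, LinearMap.smul_apply,
      Module.End.mul_apply, Module.End.one_apply, hK i hi, map_smul, hRL i hi, hLR i hi]
    rw [show 2 * N + 2 * M - 2 * r - (d : ℤ) = 2 * (N + M - r) - d by ring,
      ← casimir_two_eigenvalue hq0 hq1 (N + M - r) hi]
    module
  exact fun v => ⟨by rw [hC₁]; simp, by rw [hC₂]; simp⟩
end

section
/- Let N ≥ 6 and let q ≥ 2 be an integer. Suppose ξ₀, …, ξ_{N−1} are nonzero complex numbers satisfying, for 1 ≤ i ≤ N−3, both ξ_{i−1} − 3ξ_i + 3ξ_{i+1} − ξ_{i+2} = 0 and q⁻¹ξ_{i−1} − 3ξ_{i+1} + (q+1)ξ_{i+2} = 0. Then there is a contradiction; i.e., no such sequence of nonzero complex numbers exists. -/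
/-! The first relation says that the third differences of `ξ` vanish, so on `0, …, 5` the sequence
is quadratic: `ξ n = a + b n + c (n choose 2)`. Multiplied by `q`, the second relation applies the
shift operator `L = 1 - 3q S² + q(q+1) S³`, which commutes with differencing and multiplies
constants by `(q - 1)²`. Its second difference, first difference and value at `0` therefore give
`(q - 1)² c = (q - 1)² b = (q - 1)² a = 0`, hence `ξ 0 = a = 0`. -/

theorem exists_eq_add_mul_add_mul_choose_two_of_third_diff {R : Type*} [CommRing R]
    {ξ : ℕ → R} {M : ℕ}
    (h : ∀ j < M, ξ j - 3 * ξ (j + 1) + 3 * ξ (j + 2) - ξ (j + 3) = 0) :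
    ∃ a b c : R, ∀ n ≤ M + 2, ξ n = a + b * n + c * n.choose 2 := by
  refine ⟨ξ 0, ξ 1 - ξ 0, ξ 2 - 2 * ξ 1 + ξ 0, fun n hn ↦ ?_⟩
  induction n using Nat.strong_induction_on with
  | _ n ih =>
    match n, hn with
    | 0, _ => simp
    | 1, _ => simp
    | 2, _ => simp; ring
    | k + 3, hk =>
      have hchoose : ∀ m : ℕ, ((m + 1).choose 2 : R) = m + m.choose 2 := fun m ↦ by
        simp [Nat.choose_succ_succ]
      have hrec : ξ (k + 3) = ξ k - 3 * ξ (k + 1) + 3 * ξ (k + 2) := by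
        linear_combination -h k (by omega)
      rw [hrec, ih k (by omega) (by omega), ih (k + 1) (by omega) (by omega),
        ih (k + 2) (by omega) (by omega), hchoose (k + 2), hchoose (k + 1), hchoose k]
      push_cast
      ring

theorem quadratic_coeffs_eq_zero_of_recurrence {K : Type*} [Field K] {r a b c : K} (hr : r ≠ 1)
    {ξ : ℕ → K} (hξ : ∀ n ≤ 5, ξ n = a + b * n + c * n.choose 2)
    (h : ∀ j < 3, ξ j - 3 * r * ξ (j + 2) + r * (r + 1) * ξ (j + 3) = 0) :
    a = 0 ∧ b = 0 ∧ c = 0 := by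
  have h0 := h 0 (by norm_num)
  have h1 := h 1 (by norm_num)
  have h2 := h 2 (by norm_num)
  simp (disch := norm_num) only [hξ] at h0 h1 h2
  norm_num [Nat.choose] at h0 h1 h2
  have hr' : (r - 1) ^ 2 ≠ 0 := pow_ne_zero _ (sub_ne_zero.mpr hr)
  have hc : c = 0 := by
    refine (mul_eq_zero.mp ?_).resolve_left hr'
    linear_combination h2 - 2 * h1 + h0
  subst hc
  have hb : b = 0 := by
    refine (mul_eq_zero.mp ?_).resolve_left hr'
    linear_combination h1 - h0
  subst hb
  have ha : a = 0 := by
    refine (mul_eq_zero.mp ?_).resolve_left hr'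
    linear_combination h0
  exact ⟨ha, rfl, rfl⟩

theorem stmt_11 (N q : ℕ) (hN : 6 ≤ N) (hq : 2 ≤ q) (ξ : ℕ → ℂ)
    (hnz : ∀ i < N, ξ i ≠ 0)
    (h1 : ∀ i, 1 ≤ i → i ≤ N - 3 →
        ξ (i - 1) - 3 * ξ i + 3 * ξ (i + 1) - ξ (i + 2) = 0)
    (h2 : ∀ i, 1 ≤ i → i ≤ N - 3 →
        (q : ℂ)⁻¹ * ξ (i - 1) - 3 * ξ (i + 1) + ((q : ℂ) + 1) * ξ (i + 2) = 0) :
    False := by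
  have hq0 : (q : ℂ) ≠ 0 := by exact_mod_cast (by omega : q ≠ 0)
  have hq1 : (q : ℂ) ≠ 1 := by exact_mod_cast (by omega : q ≠ 1)
  obtain ⟨a, b, c, hξ⟩ := exists_eq_add_mul_add_mul_choose_two_of_third_diff (M := 3)
    fun j hj ↦ by simpa using h1 (j + 1) (by omega) (by omega)
  have hrec : ∀ j < 3, ξ j - 3 * q * ξ (j + 2) + q * (q + 1) * ξ (j + 3) = 0 := fun j hj ↦ by
    have := h2 (j + 1) (by omega) (by omega)
    simp only [Nat.add_sub_cancel, add_assoc, Nat.reduceAdd] at this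
    linear_combination q * this - ξ j * mul_inv_cancel₀ hq0
  obtain ⟨rfl, -, -⟩ := quadratic_coeffs_eq_zero_of_recurrence hq1 hξ hrec
  exact hnz 0 (by omega) (by simpa using hξ 0 (by omega))
end

section
/- Let q ≥ 2 be an integer, let Q be a nonzero complex number with Q^i ≠ 1 for 1 ≤ i ≤ N (N ≥ 6), and let x, y, z ∈ ℂ be such that ξ_i = x + yQ^i + zQ^{−i} is nonzero for 0 ≤ i ≤ N−1 and q⁻¹ξ_{i−1} − (Q + Q⁻¹ + 1)ξ_{i+1} + (q+1)ξ_{i+2} = 0 for 1 ≤ i ≤ N−3. Then (1 − qQ)(1 − qQ⁻¹)x = 0, (q⁻¹Q⁻¹ − Q)(1 − qQ)y = 0, (q⁻¹Q − Q⁻¹)(1 − qQ⁻¹)z = 0, and moreover yz = 0. -/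
/-!
Substituting `ξ i = x + y Q^i + z Q^{-i}`, the recurrence at index `k + 1` reads
`a + b Q^k + c Q^{-k} = 0`, where `a, b, c` are the three quantities to be shown zero, up to
the units `q⁻¹`, `Q`, `Q⁻¹`. Three consecutive indices give a Vandermonde system in the
nodes `1, Q, Q⁻¹`, which are distinct because `Q ≠ 1` and `Q² ≠ 1`; hence `a = b = c = 0`.
If moreover `y z ≠ 0`, then `Q = 1/q` or `Q² = 1/q`, so `‖Q‖ < 1`, and symmetrically `‖Q⁻¹‖ < 1`.
-/

theorem eq_zero_of_add_mul_pow_add_mul_inv_pow_eq_zero {K : Type*} [Field K] {Q a b c : K}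
    (hQ0 : Q ≠ 0) (hQ1 : Q ≠ 1) (hQ2 : Q ^ 2 ≠ 1)
    (h : ∀ k < 3, a + b * Q ^ k + c * Q⁻¹ ^ k = 0) : a = 0 ∧ b = 0 ∧ c = 0 := by
  have hinj : Function.Injective ![1, Q, Q⁻¹] := by
    have h1 : Q⁻¹ ≠ 1 := inv_ne_one.mpr hQ1
    have h2 : Q ≠ Q⁻¹ := fun h => hQ2 (by rw [sq, ← mul_inv_cancel₀ hQ0, ← h])
    intro i j hij
    fin_cases i <;> fin_cases j <;> simp_all [eq_comm]
  have := Matrix.eq_zero_of_forall_pow_sum_mul_pow_eq_zero (v := ![a, b, c]) hinj fun k => by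
    simpa [Fin.sum_univ_three] using h k k.isLt
  exact ⟨congr_fun this 0, congr_fun this 1, congr_fun this 2⟩

theorem recurrence_eq_add_mul_pow_add_mul_inv_pow {K : Type*} [Field K] {r Q : K}
    (hr : r ≠ 0) (hQ : Q ≠ 0) (x y z : K) (ξ : ℕ → K)
    (hξ : ∀ i, ξ i = x + y * Q ^ i + z * Q⁻¹ ^ i) (k : ℕ) :
    r⁻¹ * ξ k - (Q + Q⁻¹ + 1) * ξ (k + 2) + (r + 1) * ξ (k + 3) =
      r⁻¹ * ((1 - r * Q) * (1 - r * Q⁻¹) * x)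
        + Q * ((r⁻¹ * Q⁻¹ - Q) * (1 - r * Q) * y) * Q ^ k
        + Q⁻¹ * ((r⁻¹ * Q - Q⁻¹) * (1 - r * Q⁻¹) * z) * Q⁻¹ ^ k := by
  simp only [hξ, pow_add]
  field_simp
  ring

theorem norm_lt_one_of_mul_eq_zero {K : Type*} [NormedField K] {r w : K} (hr : 1 < ‖r‖)
    (h : (r⁻¹ * w⁻¹ - w) * (1 - r * w) = 0) : ‖w‖ < 1 := by
  rcases eq_or_ne w 0 with rfl | hw
  · simp
  have hr0 : r ≠ 0 := norm_pos_iff.mp (by linarith)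
  by_contra! hw1
  rcases mul_eq_zero.mp h with h | h
  · have hrw : r * w ^ 2 = 1 := by
      field_simp at h
      linear_combination -h
    have : ‖r‖ * ‖w‖ ^ 2 = 1 := by rw [← norm_pow, ← norm_mul, hrw, norm_one]
    nlinarith [one_le_pow₀ (n := 2) hw1]
  · have : ‖r‖ * ‖w‖ = 1 := by rw [← norm_mul, ← sub_eq_zero.mp h, norm_one]
    nlinarith

theorem stmt_14_general (N q : ℕ) (hN : 6 ≤ N) (hq : 2 ≤ q) (Q x y z : ℂ)
    (hQ0 : Q ≠ 0) (hQ : ∀ i : ℕ, 1 ≤ i → i ≤ N → Q ^ i ≠ 1) (ξ : ℕ → ℂ)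
    (hξ : ∀ i, ξ i = x + y * Q ^ i + z * (Q⁻¹) ^ i)
    (hrec : ∀ i, 1 ≤ i → i ≤ N - 3 →
        (q : ℂ)⁻¹ * ξ (i - 1) - (Q + Q⁻¹ + 1) * ξ (i + 1)
          + ((q : ℂ) + 1) * ξ (i + 2) = 0) :
    (1 - (q : ℂ) * Q) * (1 - (q : ℂ) * Q⁻¹) * x = 0
    ∧ ((q : ℂ)⁻¹ * Q⁻¹ - Q) * (1 - (q : ℂ) * Q) * y = 0
    ∧ ((q : ℂ)⁻¹ * Q - Q⁻¹) * (1 - (q : ℂ) * Q⁻¹) * z = 0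
    ∧ y * z = 0 := by
  have hq0 : (q : ℂ) ≠ 0 := by exact_mod_cast (by omega : q ≠ 0)
  obtain ⟨hx, hy, hz⟩ := eq_zero_of_add_mul_pow_add_mul_inv_pow_eq_zero hQ0
    (by simpa using hQ 1 le_rfl (by omega)) (hQ 2 (by omega) (by omega)) fun k hk => by
      rw [← recurrence_eq_add_mul_pow_add_mul_inv_pow hq0 hQ0 x y z ξ hξ k]
      exact hrec (k + 1) (by omega) (by omega)
  replace hx := (mul_eq_zero.mp hx).resolve_left (inv_ne_zero hq0)
  replace hy := (mul_eq_zero.mp hy).resolve_left hQ0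
  replace hz := (mul_eq_zero.mp hz).resolve_left (inv_ne_zero hQ0)
  refine ⟨hx, hy, hz, ?_⟩
  by_contra hyz
  have hq1 : 1 < ‖(q : ℂ)‖ := by rw [Complex.norm_natCast]; exact_mod_cast hq
  have hQ_lt : ‖Q‖ < 1 := norm_lt_one_of_mul_eq_zero hq1
    ((mul_eq_zero.mp hy).resolve_right (left_ne_zero_of_mul hyz))
  have hQinv_lt : ‖Q⁻¹‖ < 1 := norm_lt_one_of_mul_eq_zero hq1 (by
    rw [inv_inv]; exact (mul_eq_zero.mp hz).resolve_right (right_ne_zero_of_mul hyz))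
  rw [norm_inv] at hQinv_lt
  linarith [(inv_lt_one₀ (norm_pos_iff.mpr hQ0)).mp hQinv_lt]

theorem stmt_14 (N q : ℕ) (hN : 6 ≤ N) (hq : 2 ≤ q) (Q x y z : ℂ)
    (hQ0 : Q ≠ 0) (hQ : ∀ i : ℕ, 1 ≤ i → i ≤ N → Q ^ i ≠ 1) (ξ : ℕ → ℂ)
    (hξ : ∀ i, ξ i = x + y * Q ^ i + z * (Q⁻¹) ^ i)
    (hnz : ∀ i < N, ξ i ≠ 0)
    (hrec : ∀ i, 1 ≤ i → i ≤ N - 3 →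
        (q : ℂ)⁻¹ * ξ (i - 1) - (Q + Q⁻¹ + 1) * ξ (i + 1)
          + ((q : ℂ) + 1) * ξ (i + 2) = 0) :
    (1 - (q : ℂ) * Q) * (1 - (q : ℂ) * Q⁻¹) * x = 0
    ∧ ((q : ℂ)⁻¹ * Q⁻¹ - Q) * (1 - (q : ℂ) * Q) * y = 0
    ∧ ((q : ℂ)⁻¹ * Q - Q⁻¹) * (1 - (q : ℂ) * Q⁻¹) * z = 0
    ∧ y * z = 0 :=
  stmt_14_general N q hN hq Q x y z hQ0 hQ ξ hξ hrec
end

section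
/- In the setting of the attenuated space poset A_q(N,M), the matrices L, S, R satisfy LS − qSL = (q^M − 1)L and SR − qRS = (q^M − 1)R. -/
open scoped Classical

/-- The attenuated space poset: subspaces of `H` intersecting `h` trivially. -/
abbrev AttP (F : Type) [Field F] (H : Type) [AddCommGroup H] [Module F H]
    (h : Submodule F H) : Type := {x : Submodule F H // x ⊓ h = ⊥}

instance attPFinite (F : Type) [Field F] (H : Type) [AddCommGroup H] [Module F H]
    [Finite H] (h : Submodule F H) : Finite (AttP F H h) := by
  have : Finite (Submodule F H) :=
    Finite.of_injective (fun s => (s : Set H)) SetLike.coe_injective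
  exact Subtype.finite

noncomputable instance attPFintype (F : Type) [Field F] (H : Type) [AddCommGroup H]
    [Module F H] [Finite H] (h : Submodule F H) : Fintype (AttP F H h) :=
  Fintype.ofFinite _

/-!
All three matrices have 0/1 entries, so `(L * S) x y` counts the `z` with `x ⋖ z` and
`S z y = 1`, and `(S * L) x y` the `z` with `S x z = 1` and `z ⋖ y`; both vanish unless
`dim y = dim x + 1`. If `x ⋖ y`, write `y = x + ⟨u⟩`: there is no `z` of the second kind, and
those of the first kind are the subspaces `x + ⟨u + v⟩` with `0 ≠ v ∈ h`, so there are
`q ^ M - 1` of them. If `x ≰ y`, both counts vanish unless `W = x + y` has dimension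
`dim x + 2` and meets `h` in a line `ℓ`; then the `z` of the first kind are the `q` hyperplanes
of `W` through `x` missing `ℓ`, and the only `z` of the second kind is `(x + ℓ) ∩ y`.
As `S` is symmetric and `R = Lᵀ`, the second identity is the transpose of the first.
-/

open Module Submodule

namespace Submodule

variable {K V : Type*} [Field K] [AddCommGroup V] [Module K V]

theorem mem_span_singleton_sup_iff {w v : V} {x : Submodule K V} :
    v ∈ span K {w} ⊔ x ↔ ∃ c : K, ∃ ξ ∈ x, c • w + ξ = v := by
  simp [mem_sup, mem_span_singleton]

theorem eq_zero_of_smul_mem_of_notMem {p : Submodule K V} {c : K} {u : V} (hu : u ∉ p)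
    (hcu : c • u ∈ p) : c = 0 := by
  by_contra hc
  exact hu ((smul_mem_iff p hc).1 hcu)

theorem exists_eq_span_singleton_sup_of_covBy {x z : Submodule K V} (hxz : x ⋖ z) :
    ∃ w ∈ z, w ∉ x ∧ z = span K {w} ⊔ x := by
  obtain ⟨w, hwz, hwx⟩ := SetLike.exists_of_lt hxz.lt
  have hle : span K {w} ⊔ x ≤ z := sup_le ((span_singleton_le_iff_mem w z).2 hwz) hxz.le
  refine ⟨w, hwz, hwx, ((hxz.eq_or_eq le_sup_right hle).resolve_left fun he => hwx ?_).symm⟩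
  exact he ▸ mem_sup_left (mem_span_singleton_self w)

theorem bijOn_span_add_sup {x P : Submodule K V} {u : V} (hxP : Disjoint x P)
    (hu : u ∉ x ⊔ P) :
    Set.BijOn (fun m => span K {u + m} ⊔ x) P
      {z | x ⋖ z ∧ z ≤ span K {u} ⊔ x ⊔ P ∧ Disjoint z P} := by
  have hcov : ∀ m ∈ P, x ⋖ span K {u + m} ⊔ x := fun m hm =>
    covBy_span_singleton_sup fun hum => hu (by
      simpa using sub_mem (mem_sup_left hum) (mem_sup_right hm : m ∈ x ⊔ P))
  refine ⟨fun m hm => ⟨hcov m hm, ?_, ?_⟩, fun m hm m' hm' hmm' => ?_,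
    fun z ⟨hxz, hzle, hzP⟩ => ?_⟩
  · refine sup_le ((span_singleton_le_iff_mem _ _).2 ?_) (le_sup_right.trans le_sup_left)
    exact add_mem (mem_sup_left (mem_sup_left (mem_span_singleton_self u))) (mem_sup_right hm)
  · rw [disjoint_def]
    rintro v hv hvP
    obtain ⟨c, ξ, hξ, rfl⟩ := mem_span_singleton_sup_iff.1 hv
    have hc : c = 0 := eq_zero_of_smul_mem_of_notMem hu (by
      have : c • u = (c • (u + m) + ξ) - c • m - ξ := by rw [smul_add]; abel
      rw [this]
      exact sub_mem (mem_sup_right (sub_mem hvP (P.smul_mem c hm))) (mem_sup_left hξ))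
    subst hc
    simp only [zero_smul, zero_add] at hvP ⊢
    exact disjoint_def.1 hxP ξ hξ hvP
  · have hmem : u + m' ∈ span K {u + m} ⊔ x := by
      rw [show span K {u + m} ⊔ x = span K {u + m'} ⊔ x from hmm']
      exact mem_sup_left (mem_span_singleton_self _)
    obtain ⟨c, ξ, hξ, hc⟩ := mem_span_singleton_sup_iff.1 hmem
    have hc1 : 1 - c = 0 := eq_zero_of_smul_mem_of_notMem hu (by
      have : (1 - c) • u = ξ + (c • m - m') := by linear_combination (norm := module) -hc
      rw [this]
      exact add_mem (mem_sup_left hξ) (mem_sup_right (sub_mem (P.smul_mem c hm) hm')))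
    obtain rfl : c = 1 := (sub_eq_zero.1 hc1).symm
    have hξP : ξ ∈ P := by
      have : ξ = m' - m := by linear_combination (norm := module) hc
      exact this ▸ sub_mem hm' hm
    have := disjoint_def.1 hxP ξ hξ hξP
    simpa [this] using hc
  · obtain ⟨w, hwz, hwx, rfl⟩ := exists_eq_span_singleton_sup_of_covBy hxz
    obtain ⟨a, η, hη, rfl⟩ := mem_span_singleton_sup_iff.1 (sup_assoc (span K {u}) x P ▸ hzle
      (mem_sup_left (mem_span_singleton_self w)))
    obtain ⟨ξ, hξ, p, hp, rfl⟩ := mem_sup.1 hη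
    have hwz' : a • u + (ξ + p) ∈ span K {a • u + (ξ + p)} ⊔ x :=
      mem_sup_left (mem_span_singleton_self _)
    have ha : a ≠ 0 := by
      rintro rfl
      have hp0 : p = 0 := disjoint_def.1 hzP p
        (by simpa using sub_mem hwz' (mem_sup_right hξ : ξ ∈ span K {_} ⊔ x)) hp
      exact hwx (by simpa [hp0] using hξ)
    refine ⟨a⁻¹ • p, P.smul_mem _ hp, ?_⟩
    have hle : span K {u + a⁻¹ • p} ⊔ x ≤ span K {a • u + (ξ + p)} ⊔ x := by
      refine sup_le ((span_singleton_le_iff_mem _ _).2 ?_) le_sup_right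
      have : u + a⁻¹ • p = a⁻¹ • (a • u + (ξ + p)) - a⁻¹ • ξ := by
        rw [smul_add, smul_add, smul_smul, inv_mul_cancel₀ ha, one_smul]; abel
      rw [this]
      exact sub_mem (smul_mem _ _ hwz') (smul_mem _ _ (mem_sup_right hξ))
    exact (hxz.eq_or_eq (hcov _ (P.smul_mem _ hp)).le hle).resolve_left
      (hcov _ (P.smul_mem _ hp)).lt.ne'

section FiniteDimensional

variable [FiniteDimensional K V]

theorem covBy_iff_finrank_eq {x z : Submodule K V} :
    x ⋖ z ↔ x ≤ z ∧ finrank K z = finrank K x + 1 := by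
  constructor
  · intro hxz
    obtain ⟨w, -, hwx, rfl⟩ := exists_eq_span_singleton_sup_of_covBy hxz
    exact ⟨le_sup_right, sup_comm x (span K {w}) ▸ finrank_sup_span_singleton hwx⟩
  · rintro ⟨hle, hdim⟩
    refine ⟨lt_of_le_of_ne hle fun he => by rw [he] at hdim; omega, fun c hxc hcz => ?_⟩
    have := finrank_lt_finrank_of_lt hxc
    have := finrank_lt_finrank_of_lt hcz
    omega

theorem finrank_inf_add_finrank_eq {y w h : Submodule K V} (hyw : y ≤ w)
    (hyh : Disjoint y h) : finrank K ↥(w ⊓ h) + finrank K y = finrank K ↥((y ⊔ h) ⊓ w) := by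
  have hdisj : y ⊓ (w ⊓ h) = ⊥ := disjoint_iff.1 (hyh.mono_right inf_le_right)
  have := finrank_sup_add_finrank_inf_eq y (w ⊓ h)
  rw [hdisj, finrank_bot, add_zero, inf_comm w h, ← sup_inf_assoc_of_le h hyw] at this
  rw [inf_comm w h]
  omega

theorem le_sup_iff_finrank_inf_add_finrank_eq {y w h : Submodule K V} (hyw : y ≤ w)
    (hyh : Disjoint y h) : w ≤ y ⊔ h ↔ finrank K ↥(w ⊓ h) + finrank K y = finrank K w := by
  rw [finrank_inf_add_finrank_eq hyw hyh, ← inf_eq_right]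
  exact ⟨fun he => by rw [he], eq_of_le_of_finrank_eq inf_le_right⟩

theorem finrank_sup_of_disjoint {x y : Submodule K V} (hxy : Disjoint x y) :
    finrank K ↥(x ⊔ y) = finrank K x + finrank K y := by
  have := finrank_sup_add_finrank_inf_eq x y
  rwa [disjoint_iff.1 hxy, finrank_bot, add_zero] at this

theorem finrank_add_two_le_finrank_sup {x y : Submodule K V} (hxy : ¬x ≤ y)
    (hdim : finrank K y = finrank K x + 1) : finrank K x + 2 ≤ finrank K ↥(x ⊔ y) := by
  have := finrank_lt_finrank_of_lt (inf_le_left.lt_of_ne fun he => hxy (he ▸ inf_le_right) :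
    x ⊓ y < x)
  have := finrank_sup_add_finrank_inf_eq x y
  omega

end FiniteDimensional

end Submodule

section SRel

variable {K V : Type*} [Field K] [AddCommGroup V] [Module K V]

def SRel (h x y : Submodule K V) : Prop :=
  finrank K x = finrank K y ∧ finrank K ↥(x ⊔ y) = finrank K x + 1 ∧
    finrank K ↥((x ⊔ y) ⊓ h) = 1

theorem SRel.symm {h x y : Submodule K V} (hxy : SRel h x y) : SRel h y x := by
  obtain ⟨h1, h2, h3⟩ := hxy
  exact ⟨h1.symm, by rw [sup_comm]; omega, by rwa [sup_comm]⟩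

variable [FiniteDimensional K V] {h x y z : Submodule K V}

theorem sRel_iff_of_covBy (hxy : x ⋖ y) (hxz : x ⋖ z) (hyh : Disjoint y h) :
    SRel h z y ↔ z ≠ y ∧ z ≤ y ⊔ h := by
  by_cases hzy : z = y
  · subst hzy
    simp only [SRel, ne_eq, not_true_eq_false, false_and, iff_false]
    rw [sup_idem]
    omega
  have hinf : z ⊓ y = x := by
    refine ((hxz.eq_or_eq (le_inf hxz.le hxy.le) inf_le_left).resolve_right fun he => hzy ?_)
    exact eq_of_le_of_finrank_eq (inf_eq_left.1 he)
      ((covBy_iff_finrank_eq.1 hxz).2.trans (covBy_iff_finrank_eq.1 hxy).2.symm)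
  have hsup := finrank_sup_add_finrank_inf_eq z y
  rw [hinf, (covBy_iff_finrank_eq.1 hxz).2, (covBy_iff_finrank_eq.1 hxy).2] at hsup
  have hle : z ≤ y ⊔ h ↔ z ⊔ y ≤ y ⊔ h := by rw [sup_le_iff, and_iff_left le_sup_left]
  rw [hle, le_sup_iff_finrank_inf_add_finrank_eq le_sup_right hyh,
    (covBy_iff_finrank_eq.1 hxy).2]
  simp only [SRel, (covBy_iff_finrank_eq.1 hxz).2, (covBy_iff_finrank_eq.1 hxy).2, ne_eq, hzy,
    not_false_eq_true, true_and]
  omega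

theorem sRel_iff_of_not_le (hxy : ¬x ≤ y) (hdim : finrank K y = finrank K x + 1)
    (hxz : x ⋖ z) :
    SRel h z y ↔ z ≤ x ⊔ y ∧ finrank K ↥(x ⊔ y) = finrank K x + 2 ∧
      finrank K ↥((x ⊔ y) ⊓ h) = 1 := by
  have hW := finrank_add_two_le_finrank_sup hxy hdim
  rw [covBy_iff_finrank_eq] at hxz
  have hle : x ⊔ y ≤ z ⊔ y := sup_le_sup_right hxz.1 y
  constructor
  · rintro ⟨h1, h2, h3⟩
    have hW : x ⊔ y = z ⊔ y := eq_of_le_of_finrank_le hle (by omega)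
    rw [hW]
    exact ⟨le_sup_left, by omega, h3⟩
  · rintro ⟨hzW, h2, h3⟩
    have hW : x ⊔ y = z ⊔ y := le_antisymm hle (sup_le hzW le_sup_right)
    rw [hW] at h2 h3
    exact ⟨by omega, by omega, h3⟩

theorem sRel_and_covBy_of_finrank_sup_eq (hdim : finrank K y = finrank K x + 1) (hxh : Disjoint x h)
    (hW2 : finrank K ↥(x ⊔ y) = finrank K x + 2) (hW1 : finrank K ↥((x ⊔ y) ⊓ h) = 1) :
    SRel h x ((x ⊔ (x ⊔ y) ⊓ h) ⊓ y) ∧ (x ⊔ (x ⊔ y) ⊓ h) ⊓ y ⋖ y := by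
  set ℓ := (x ⊔ y) ⊓ h
  have hxℓW : x ⊔ ℓ ≤ x ⊔ y := sup_le le_sup_left inf_le_left
  have hxℓ : finrank K ↥(x ⊔ ℓ) = finrank K x + 1 := by
    rw [finrank_sup_of_disjoint (hxh.mono_right inf_le_right), hW1]
  have hz₀ := finrank_sup_add_finrank_inf_eq (x ⊔ ℓ) y
  rw [show x ⊔ ℓ ⊔ y = x ⊔ y from le_antisymm (sup_le hxℓW le_sup_right)
    (sup_le_sup_right le_sup_left y), hW2, hxℓ, hdim] at hz₀
  have hxz₀ : x ⊔ (x ⊔ ℓ) ⊓ y = x ⊔ ℓ := by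
    rw [sup_comm, inf_sup_assoc_of_le y le_sup_left, sup_comm y x, inf_eq_left.2 hxℓW]
  have hℓ : (x ⊔ ℓ) ⊓ h = ℓ :=
    le_antisymm (inf_le_inf_right h hxℓW) (le_inf le_sup_right inf_le_right)
  refine ⟨⟨by omega, by rw [hxz₀, hxℓ], by rw [hxz₀, hℓ, hW1]⟩, ?_⟩
  exact covBy_iff_finrank_eq.2 ⟨inf_le_right, by omega⟩

theorem eq_of_sRel_of_covBy (hxy : ¬x ≤ y) (hdim : finrank K y = finrank K x + 1)
    (hxh : Disjoint x h) (hyh : Disjoint y h) (hxz : SRel h x z) (hzy : z ⋖ y) :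
    (finrank K ↥(x ⊔ y) = finrank K x + 2 ∧ finrank K ↥((x ⊔ y) ⊓ h) = 1) ∧
      z = (x ⊔ (x ⊔ y) ⊓ h) ⊓ y := by
  obtain ⟨h1, h2, h3⟩ := hxz
  rw [covBy_iff_finrank_eq] at hzy
  have hW2 : finrank K ↥(x ⊔ y) = finrank K x + 2 := by
    have := finrank_add_two_le_finrank_sup hxy hdim
    have := finrank_mono (inf_le_inf_left x hzy.1)
    have := finrank_sup_add_finrank_inf_eq x z
    have := finrank_sup_add_finrank_inf_eq x y
    omega
  have hℓ : (x ⊔ z) ⊓ h = (x ⊔ y) ⊓ h := by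
    refine eq_of_le_of_finrank_le (inf_le_inf_right h (sup_le_sup_left hzy.1 x)) ?_
    have := finrank_inf_add_finrank_eq (le_sup_right : y ≤ x ⊔ y) hyh
    have := finrank_mono (inf_le_right : (y ⊔ h) ⊓ (x ⊔ y) ≤ x ⊔ y)
    omega
  have hxℓ : x ⊔ (x ⊔ y) ⊓ h = x ⊔ z := by
    rw [← hℓ]
    refine eq_of_le_of_finrank_eq (sup_le le_sup_left inf_le_left) ?_
    rw [finrank_sup_of_disjoint (hxh.mono_right inf_le_right), h3, h2]
  refine ⟨⟨hW2, hℓ ▸ h3⟩, eq_of_le_of_finrank_eq (le_inf (hxℓ ▸ le_sup_right) hzy.1) ?_⟩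
  have := finrank_sup_add_finrank_inf_eq (x ⊔ z) y
  rw [sup_assoc, sup_eq_right.2 hzy.1, hW2, h2] at this
  rw [hxℓ]
  omega

theorem not_sRel_of_covBy (hxy : x ⋖ y) (hyh : Disjoint y h) (hzy : z ⋖ y) : ¬SRel h x z := by
  rintro ⟨h1, h2, h3⟩
  rw [covBy_iff_finrank_eq] at hxy hzy
  have hxz : x ⊔ z = y := eq_of_le_of_finrank_eq (sup_le hxy.1 hzy.1) (by omega)
  rw [hxz, disjoint_iff.1 hyh, finrank_bot] at h3
  exact zero_ne_one h3

end SRel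

section Counting

variable {K V : Type*} [Field K] [AddCommGroup V] [Module K V] [FiniteDimensional K V]
  {h x y : Submodule K V}

theorem ncard_covBy_sRel_of_covBy [Finite V] (hxy : x ⋖ y) (hxh : Disjoint x h)
    (hyh : Disjoint y h) :
    {z | Disjoint z h ∧ x ⋖ z ∧ SRel h z y}.ncard = Nat.card h - 1 := by
  obtain ⟨u, -, hux, rfl⟩ := exists_eq_span_singleton_sup_of_covBy hxy
  have hu : u ∉ x ⊔ h := by
    intro hu
    obtain ⟨ξ, hξ, p, hp, rfl⟩ := mem_sup.1 hu
    have hp0 : p = 0 := disjoint_def.1 hyh p (by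
      simpa using sub_mem (mem_sup_left (mem_span_singleton_self (ξ + p)))
        (mem_sup_right hξ : ξ ∈ span K {ξ + p} ⊔ x)) hp
    exact hux (by simpa [hp0] using hξ)
  have hbij := (bijOn_span_add_sup hxh hu).sdiff_singleton h.zero_mem
  simp only [add_zero] at hbij
  have hset : {z | Disjoint z h ∧ x ⋖ z ∧ SRel h z (span K {u} ⊔ x)} =
      {z | x ⋖ z ∧ z ≤ span K {u} ⊔ x ⊔ h ∧ Disjoint z h} \ {span K {u} ⊔ x} := by
    ext z
    simp only [Set.mem_ofPred_eq, Set.mem_sdiff, Set.mem_singleton_iff]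
    constructor
    · rintro ⟨hzh, hxz, hzy⟩
      exact ⟨⟨hxz, ((sRel_iff_of_covBy hxy hxz hyh).1 hzy).2, hzh⟩,
        ((sRel_iff_of_covBy hxy hxz hyh).1 hzy).1⟩
    · rintro ⟨⟨hxz, hzle, hzh⟩, hzy⟩
      exact ⟨hzh, hxz, (sRel_iff_of_covBy hxy hxz hyh).2 ⟨hzy, hzle⟩⟩
  rw [hset, ← hbij.ncard_eq, Set.ncard_sdiff_singleton_of_mem h.zero_mem,
    ← Nat.card_coe_set_eq]
  rfl

theorem ncard_covBy_sRel_of_not_le (hxy : ¬x ≤ y) (hdim : finrank K y = finrank K x + 1)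
    (hxh : Disjoint x h) :
    {z | Disjoint z h ∧ x ⋖ z ∧ SRel h z y}.ncard =
      if finrank K ↥(x ⊔ y) = finrank K x + 2 ∧ finrank K ↥((x ⊔ y) ⊓ h) = 1
      then Nat.card K else 0 := by
  split_ifs with hW
  · set ℓ := (x ⊔ y) ⊓ h
    have hxℓ : finrank K ↥(x ⊔ ℓ) = finrank K x + 1 := by
      rw [finrank_sup_of_disjoint (hxh.mono_right inf_le_right), hW.2]
    obtain ⟨u, huW, huxℓ⟩ := SetLike.exists_of_lt (lt_of_le_of_ne
      (sup_le le_sup_left inf_le_left : x ⊔ ℓ ≤ x ⊔ y) fun he => by rw [he, hW.1] at hxℓ; omega)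
    have hspan : span K {u} ⊔ x ⊔ ℓ = x ⊔ y := by
      rw [sup_assoc, sup_comm]
      refine eq_of_le_of_finrank_eq (sup_le (sup_le le_sup_left inf_le_left)
        ((span_singleton_le_iff_mem u _).2 huW)) ?_
      rw [finrank_sup_span_singleton huxℓ, hxℓ, hW.1]
    have hset : {z | Disjoint z h ∧ x ⋖ z ∧ SRel h z y} =
        {z | x ⋖ z ∧ z ≤ span K {u} ⊔ x ⊔ ℓ ∧ Disjoint z ℓ} := by
      ext z
      simp only [Set.mem_ofPred_eq, hspan]
      constructor
      · rintro ⟨hzh, hxz, hzy⟩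
        exact ⟨hxz, ((sRel_iff_of_not_le hxy hdim hxz).1 hzy).1, hzh.mono_right inf_le_right⟩
      · rintro ⟨hxz, hzW, hzℓ⟩
        refine ⟨?_, hxz, (sRel_iff_of_not_le hxy hdim hxz).2 ⟨hzW, hW⟩⟩
        rwa [disjoint_iff, ← inf_eq_left.2 hzW, inf_assoc, ← disjoint_iff]
    rw [hset, ← (bijOn_span_add_sup (hxh.mono_right inf_le_right) huxℓ).ncard_eq,
      ← Nat.card_coe_set_eq]
    change Nat.card ℓ = Nat.card K
    rw [Module.natCard_eq_pow_finrank (K := K), hW.2, pow_one]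
  · refine (congrArg Set.ncard (Set.eq_empty_of_forall_notMem ?_)).trans (Set.ncard_empty _)
    rintro z ⟨-, hxz, hzy⟩
    exact hW ((sRel_iff_of_not_le hxy hdim hxz).1 hzy).2

theorem ncard_sRel_and_covBy_of_finrank_sup_eq (hxy : ¬x ≤ y) (hdim : finrank K y = finrank K x + 1)
    (hxh : Disjoint x h) (hyh : Disjoint y h) :
    {z | Disjoint z h ∧ SRel h x z ∧ z ⋖ y}.ncard =
      if finrank K ↥(x ⊔ y) = finrank K x + 2 ∧ finrank K ↥((x ⊔ y) ⊓ h) = 1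
      then 1 else 0 := by
  split_ifs with hW
  · rw [Set.ncard_eq_one]
    refine ⟨(x ⊔ (x ⊔ y) ⊓ h) ⊓ y, Set.ext fun z => ⟨?_, ?_⟩⟩
    · rintro ⟨-, hxz, hzy⟩
      exact (eq_of_sRel_of_covBy hxy hdim hxh hyh hxz hzy).2
    · rintro rfl
      exact ⟨hyh.mono_left inf_le_right, sRel_and_covBy_of_finrank_sup_eq hdim hxh hW.1 hW.2⟩
  · refine (congrArg Set.ncard (Set.eq_empty_of_forall_notMem ?_)).trans (Set.ncard_empty _)
    rintro z ⟨-, hxz, hzy⟩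
    exact hW (eq_of_sRel_of_covBy hxy hdim hxh hyh hxz hzy).1

theorem ncard_covBy_sRel_eq [Finite V] (hxh : Disjoint x h) (hyh : Disjoint y h) :
    {z | Disjoint z h ∧ x ⋖ z ∧ SRel h z y}.ncard =
      Nat.card K * {z | Disjoint z h ∧ SRel h x z ∧ z ⋖ y}.ncard +
        if x ⋖ y then Nat.card h - 1 else 0 := by
  by_cases hxy : x ⋖ y
  · have hSL : {z | Disjoint z h ∧ SRel h x z ∧ z ⋖ y} = ∅ :=
      Set.eq_empty_of_forall_notMem fun z ⟨_, hxz, hzy⟩ => not_sRel_of_covBy hxy hyh hzy hxz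
    rw [if_pos hxy, hSL, Set.ncard_empty, mul_zero, zero_add,
      ncard_covBy_sRel_of_covBy hxy hxh hyh]
  rw [if_neg hxy, add_zero]
  by_cases hdim : finrank K y = finrank K x + 1
  · have hxy' : ¬x ≤ y := fun hle => hxy (covBy_iff_finrank_eq.2 ⟨hle, hdim⟩)
    rw [ncard_covBy_sRel_of_not_le hxy' hdim hxh, ncard_sRel_and_covBy_of_finrank_sup_eq hxy' hdim hxh hyh]
    split_ifs <;> simp
  · have hLS : {z | Disjoint z h ∧ x ⋖ z ∧ SRel h z y} = ∅ :=
      Set.eq_empty_of_forall_notMem fun z ⟨_, hxz, hzy⟩ =>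
        hdim (hzy.1.symm.trans (covBy_iff_finrank_eq.1 hxz).2)
    have hSL : {z | Disjoint z h ∧ SRel h x z ∧ z ⋖ y} = ∅ :=
      Set.eq_empty_of_forall_notMem fun z ⟨_, hxz, hzy⟩ =>
        hdim ((covBy_iff_finrank_eq.1 hzy).2.trans (by rw [hxz.1]))
    rw [hLS, hSL, Set.ncard_empty, mul_zero]

end Counting

section AttP

variable {F : Type} [Field F] {H : Type} [AddCommGroup H] [Module F H] {h : Submodule F H}

theorem attP_covBy_iff (x y : AttP F H h) :
    (x.1 < y.1 ∧ ¬∃ z : AttP F H h, x.1 < z.1 ∧ z.1 < y.1) ↔ x.1 ⋖ y.1 := by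
  refine ⟨fun ⟨hlt, hno⟩ => ⟨hlt, fun c hxc hcy => hno ⟨⟨c, ?_⟩, hxc, hcy⟩⟩,
    fun hxy => ⟨hxy.lt, fun ⟨_, hxz, hzy⟩ => hxy.2 hxz hzy⟩⟩
  exact eq_bot_iff.2 (y.2 ▸ inf_le_inf_right h hcy.le)

theorem sum_attP_ite [Finite H] (P : Submodule F H → Prop) [DecidablePred P] :
    (∑ z : AttP F H h, if P z.1 then (1 : ℂ) else 0) =
      ({z | Disjoint z h ∧ P z}.ncard : ℂ) := by
  rw [Finset.sum_boole]
  congr 1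
  have : {z | Disjoint z h ∧ P z} =
      Subtype.val '' (↑(Finset.univ.filter fun z : AttP F H h => P z.1) : Set (AttP F H h)) := by
    ext z
    simp [disjoint_iff, and_comm]
  rw [this, Set.ncard_image_of_injective _ Subtype.val_injective, Set.ncard_coe_finset]

end AttP

theorem stmt_17_general (q M : ℕ)
    (F : Type) [Field F] [Fintype F] (hF : Fintype.card F = q)
    (H : Type) [AddCommGroup H] [Module F H] [Finite H]
    (h : Submodule F H) (hh : Module.finrank F ↥h = M)
    (L R S : Matrix (AttP F H h) (AttP F H h) ℂ)
    (hL : ∀ x y : AttP F H h, L x y =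
      if x.1 < y.1 ∧ ¬∃ z : AttP F H h, x.1 < z.1 ∧ z.1 < y.1 then 1 else 0)
    (hR : ∀ x y : AttP F H h, R x y =
      if y.1 < x.1 ∧ ¬∃ z : AttP F H h, y.1 < z.1 ∧ z.1 < x.1 then 1 else 0)
    (hS : ∀ x y : AttP F H h, S x y =
      if Module.finrank F ↥x.1 = Module.finrank F ↥y.1
        ∧ Module.finrank F ↥(x.1 ⊔ y.1) = Module.finrank F ↥x.1 + 1
        ∧ Module.finrank F ↥((x.1 ⊔ y.1) ⊓ h) = 1 then 1 else 0) :
    L * S - (q : ℂ) • (S * L) = ((q : ℂ) ^ M - 1) • L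
    ∧ S * R - (q : ℂ) • (R * S) = ((q : ℂ) ^ M - 1) • R := by
  have hL' : ∀ x y, L x y = if x.1 ⋖ y.1 then 1 else 0 := fun x y =>
    (hL x y).trans (if_congr (attP_covBy_iff x y) rfl rfl)
  have hS' : ∀ x y, S x y = if SRel h x.1 y.1 then 1 else 0 := fun x y =>
    (hS x y).trans (if_congr Iff.rfl rfl rfl)
  have hcard : (Nat.card h : ℂ) = (q : ℂ) ^ M := by
    rw [Module.natCard_eq_pow_finrank (K := F), hh, Nat.card_eq_fintype_card, hF, Nat.cast_pow]
  have hLS : L * S - (q : ℂ) • (S * L) = ((q : ℂ) ^ M - 1) • L := by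
    ext x y
    simp only [Matrix.sub_apply, Matrix.smul_apply, Matrix.mul_apply, smul_eq_mul, hL', hS',
      ite_zero_mul_ite_zero, mul_one]
    rw [sum_attP_ite (fun z => x.1 ⋖ z ∧ SRel h z y.1),
      sum_attP_ite (fun z => SRel h x.1 z ∧ z ⋖ y.1),
      ncard_covBy_sRel_eq (disjoint_iff.2 x.2) (disjoint_iff.2 y.2), Nat.card_eq_fintype_card,
      hF]
    split_ifs
    · rw [Nat.cast_add, Nat.cast_sub Nat.card_pos, hcard]
      push_cast
      ring
    · push_cast
      ring
  have hSt : S.transpose = S := by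
    ext x y
    rw [Matrix.transpose_apply, hS', hS']
    exact if_congr ⟨SRel.symm, SRel.symm⟩ rfl rfl
  have hRt : L.transpose = R := by
    ext x y
    rw [Matrix.transpose_apply, hL, hR]
  refine ⟨hLS, ?_⟩
  simpa only [Matrix.transpose_sub, Matrix.transpose_smul, Matrix.transpose_mul, hSt, hRt] using
    congrArg Matrix.transpose hLS

theorem stmt_17 (q N M : ℕ) (hq : 2 ≤ q) (hN : 0 < N) (hM : 0 < M)
    (F : Type) [Field F] [Fintype F] (hF : Fintype.card F = q)
    (H : Type) [AddCommGroup H] [Module F H] [Finite H]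
    (hH : Module.finrank F H = N + M)
    (h : Submodule F H) (hh : Module.finrank F ↥h = M)
    (L R S : Matrix (AttP F H h) (AttP F H h) ℂ)
    (hL : ∀ x y : AttP F H h, L x y =
      if x.1 < y.1 ∧ ¬∃ z : AttP F H h, x.1 < z.1 ∧ z.1 < y.1 then 1 else 0)
    (hR : ∀ x y : AttP F H h, R x y =
      if y.1 < x.1 ∧ ¬∃ z : AttP F H h, y.1 < z.1 ∧ z.1 < x.1 then 1 else 0)
    (hS : ∀ x y : AttP F H h, S x y =
      if Module.finrank F ↥x.1 = Module.finrank F ↥y.1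
        ∧ Module.finrank F ↥(x.1 ⊔ y.1) = Module.finrank F ↥x.1 + 1
        ∧ Module.finrank F ↥((x.1 ⊔ y.1) ⊓ h) = 1 then 1 else 0) :
    L * S - (q : ℂ) • (S * L) = ((q : ℂ) ^ M - 1) • L
    ∧ S * R - (q : ℂ) • (R * S) = ((q : ℂ) ^ M - 1) • R :=
  stmt_17_general q M F hF H h hh L R S hL hR hS
end

section
/- Let d ≥ 3 and let A, A* be a pair of linear operators on a (d+1)-dimensional complex vector space such that, in some basis, A is irreducible lower bidiagonal with diagonal entries θ₀,…,θ_d and A* is irreducible upper bidiagonal with diagonal entries θ*₀,…,θ*_d, all θ_i distinct and all θ*_i distinct. Let β, γ, γ*, ϱ, ϱ* ∈ ℂ. If for 2 ≤ i ≤ d−1: β + 1 = (θ_{i−2} − θ_{i+1})/(θ_{i−1} − θ_i) = (θ*_{i−2} − θ*_{i+1})/(θ*_{i−1} − θ*_i); for 1 ≤ i ≤ d−1: γ = θ_{i−1} − βθ_i + θ_{i+1} and γ* = θ*_{i−1} − βθ*_i + θ*_{i+1}; and for 1 ≤ i ≤ d: ϱ = θ²_{i−1} − βθ_{i−1}θ_i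 + θ²_i − γ(θ_{i−1} + θ_i) and ϱ* = θ*²_{i−1} − βθ*_{i−1}θ*_i + θ*²_i − γ*(θ*_{i−1} + θ*_i), then whenever A, A* form a Leonard pair with eigenvalue sequence {θ_i} and dual eigenvalue sequence {θ*_i}, they satisfy the tridiagonal relations [A, A²A* − βAA*A + A*A² − γ(AA* + A*A) − ϱA*] = 0 and [A*, A*²A − βA*AA* + AA*² − γ*(A*A + AA*) − ϱ*A] = 0. -/
/-- A matrix is irreducible tridiagonal: zero off the three central diagonals,
with all superdiagonal and subdiagonal entries nonzero. -/
def IsIrredTridiagonal {n : ℕ} (M : Matrix (Fin n) (Fin n) ℂ) : Prop :=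
  (∀ i j : Fin n, ((i : ℕ) + 1 < (j : ℕ) ∨ (j : ℕ) + 1 < (i : ℕ)) → M i j = 0)
  ∧ (∀ i j : Fin n, ((i : ℕ) = (j : ℕ) + 1 ∨ (j : ℕ) = (i : ℕ) + 1) → M i j ≠ 0)

/-! In a basis in which `X` is diagonal with entries `θ i` and `Y` is tridiagonal, the `(i, j)`
entry of `⁅X, X²Y - βXYX + YX² - γ(XY + YX) - ϱY⁆` is `(θ i - θ j) P(θ i, θ j) Y i j`, where
`P(x, y) = x² - βxy + y² - γ(x + y) - ϱ`. It vanishes on the diagonal because `θ i = θ j`, off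
the three central diagonals because `Y i j = 0`, and next to the diagonal because the hypothesis
on `ϱ` says exactly that `P` vanishes at consecutive eigenvalues. The relation is invariant under
similarity, so each of the two bases of the Leonard pair gives one of the two relations. -/

open Matrix

variable {R : Type*} [CommRing R]

def tridiagonalPoly (β γ ϱ x y : R) : R :=
  x ^ 2 - β * x * y + y ^ 2 - γ * (x + y) - ϱ

theorem tridiagonalPoly_comm (β γ ϱ x y : R) :
    tridiagonalPoly β γ ϱ x y = tridiagonalPoly β γ ϱ y x := by
  unfold tridiagonalPoly; ring

theorem tridiagonalPoly_eq_zero_of_succ {d : ℕ} (β γ ϱ : R) (θ : ℕ → R)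
    (hϱ : ∀ i, 1 ≤ i → i ≤ d →
      ϱ = θ (i - 1) ^ 2 - β * θ (i - 1) * θ i + θ i ^ 2 - γ * (θ (i - 1) + θ i))
    (i j : Fin (d + 1)) (hij : (j : ℕ) = i + 1) :
    tridiagonalPoly β γ ϱ (θ i) (θ j) = 0 := by
  have h := hϱ j (by omega) (by omega)
  rw [show (j : ℕ) - 1 = i by omega] at h
  unfold tridiagonalPoly
  linear_combination -h

def tridiagonalRelator {A : Type*} [Ring A] [Algebra R A] (β γ ϱ : R) (X Y : A) : A :=
  X ^ 2 * Y - β • (X * Y * X) + Y * X ^ 2 - γ • (X * Y + Y * X) - ϱ • Y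

theorem map_tridiagonalRelator {A B F : Type*} [Ring A] [Algebra R A] [Ring B] [Algebra R B]
    [FunLike F A B] [AlgHomClass F R A B] (f : F) (β γ ϱ : R) (X Y : A) :
    f (tridiagonalRelator β γ ϱ X Y) = tridiagonalRelator β γ ϱ (f X) (f Y) := by
  simp only [tridiagonalRelator, map_sub, map_add, map_mul, map_pow, map_smul]

theorem tridiagonalRelator_diagonal_apply {n : ℕ} (β γ ϱ : R) (θ : Fin n → R)
    (Y : Matrix (Fin n) (Fin n) R) (i j : Fin n) :
    tridiagonalRelator β γ ϱ (diagonal θ) Y i j = tridiagonalPoly β γ ϱ (θ i) (θ j) * Y i j := by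
  simp only [tridiagonalRelator, tridiagonalPoly, sq, diagonal_mul_diagonal, Matrix.sub_apply,
    Matrix.add_apply, Matrix.smul_apply, smul_eq_mul, diagonal_mul, mul_diagonal]
  ring

theorem commute_diagonal_tridiagonalRelator {n : ℕ} (β γ ϱ : R) (θ : Fin n → R)
    (Y : Matrix (Fin n) (Fin n) R)
    (hY : ∀ i j : Fin n, ((i : ℕ) + 1 < (j : ℕ) ∨ (j : ℕ) + 1 < (i : ℕ)) → Y i j = 0)
    (hθ : ∀ i j : Fin n, (j : ℕ) = i + 1 → tridiagonalPoly β γ ϱ (θ i) (θ j) = 0) :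
    Commute (diagonal θ) (tridiagonalRelator β γ ϱ (diagonal θ) Y) := by
  rw [Commute, SemiconjBy, ← sub_eq_zero]
  ext i j
  simp only [Matrix.sub_apply, diagonal_mul, mul_diagonal, tridiagonalRelator_diagonal_apply,
    Matrix.zero_apply]
  rcases lt_trichotomy (i : ℕ) j with hij | hij | hij
  · rcases (by omega : (j : ℕ) = i + 1 ∨ (i : ℕ) + 1 < j) with hadj | hfar
    · rw [hθ i j hadj]; ring
    · rw [hY i j (Or.inl hfar)]; ring
  · rw [Fin.ext hij]; ring
  · rcases (by omega : (i : ℕ) = j + 1 ∨ (j : ℕ) + 1 < i) with hadj | hfar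
    · rw [tridiagonalPoly_comm, hθ j i hadj]; ring
    · rw [hY i j (Or.inr hfar)]; ring

theorem commute_tridiagonalRelator_of_similar {n : ℕ} (β γ ϱ : R) (θ : Fin n → R)
    {T X Y : Matrix (Fin n) (Fin n) R} (hT : IsUnit T) (hX : T⁻¹ * X * T = diagonal θ)
    (hY : ∀ i j : Fin n, ((i : ℕ) + 1 < (j : ℕ) ∨ (j : ℕ) + 1 < (i : ℕ)) → (T⁻¹ * Y * T) i j = 0)
    (hθ : ∀ i j : Fin n, (j : ℕ) = i + 1 → tridiagonalPoly β γ ϱ (θ i) (θ j) = 0) :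
    Commute X (tridiagonalRelator β γ ϱ X Y) := by
  let f := MulSemiringAction.toAlgEquiv R (Matrix (Fin n) (Fin n) R) (ConjAct.toConjAct hT.unit⁻¹)
  have hf : ∀ M, f M = T⁻¹ * M * T := fun M => by
    simp [f, ConjAct.units_smul_def, Matrix.coe_units_inv]
  have h := commute_diagonal_tridiagonalRelator β γ ϱ θ _ hY hθ
  rw [← hX, ← hf, ← hf, ← map_tridiagonalRelator] at h
  simpa only [AlgEquiv.symm_apply_apply] using h.map f.symm

theorem stmt_19_general (d : ℕ) (θ θs : ℕ → ℂ)
    (A B : Matrix (Fin (d + 1)) (Fin (d + 1)) ℂ)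
    (β γ γs ϱ ϱs : ℂ)
    (hϱ : ∀ i, 1 ≤ i → i ≤ d →
      ϱ = θ (i - 1) ^ 2 - β * θ (i - 1) * θ i + θ i ^ 2 - γ * (θ (i - 1) + θ i))
    (hϱs : ∀ i, 1 ≤ i → i ≤ d →
      ϱs = θs (i - 1) ^ 2 - β * θs (i - 1) * θs i + θs i ^ 2 - γs * (θs (i - 1) + θs i))
    -- A, B form a Leonard pair with eigenvalue sequence θ and dual eigenvalue sequence θ*
    (hLP1 : ∃ T : Matrix (Fin (d + 1)) (Fin (d + 1)) ℂ, IsUnit T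
      ∧ T⁻¹ * A * T = Matrix.diagonal (fun i : Fin (d + 1) => θ (i : ℕ))
      ∧ IsIrredTridiagonal (T⁻¹ * B * T))
    (hLP2 : ∃ T : Matrix (Fin (d + 1)) (Fin (d + 1)) ℂ, IsUnit T
      ∧ IsIrredTridiagonal (T⁻¹ * A * T)
      ∧ T⁻¹ * B * T = Matrix.diagonal (fun i : Fin (d + 1) => θs (i : ℕ))) :
    A * (A ^ 2 * B - β • (A * B * A) + B * A ^ 2 - γ • (A * B + B * A) - ϱ • B)
      - (A ^ 2 * B - β • (A * B * A) + B * A ^ 2 - γ • (A * B + B * A) - ϱ • B) * A = 0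
    ∧ B * (B ^ 2 * A - β • (B * A * B) + A * B ^ 2 - γs • (B * A + A * B) - ϱs • A)
      - (B ^ 2 * A - β • (B * A * B) + A * B ^ 2 - γs • (B * A + A * B) - ϱs • A) * B = 0 := by
  obtain ⟨T, hT, hAT, hBT⟩ := hLP1
  obtain ⟨S, hS, hAS, hBS⟩ := hLP2
  have hA := commute_tridiagonalRelator_of_similar β γ ϱ _ hT hAT hBT.1
    (tridiagonalPoly_eq_zero_of_succ β γ ϱ θ hϱ)
  have hB := commute_tridiagonalRelator_of_similar β γs ϱs _ hS hBS hAS.1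
    (tridiagonalPoly_eq_zero_of_succ β γs ϱs θs hϱs)
  exact ⟨sub_eq_zero.mpr hA.eq, sub_eq_zero.mpr hB.eq⟩

theorem stmt_19 (d : ℕ) (hd : 3 ≤ d) (θ θs : ℕ → ℂ)
    (A B : Matrix (Fin (d + 1)) (Fin (d + 1)) ℂ)
    -- A is irreducible lower bidiagonal with diagonal entries θ
    (hAlow : ∀ i j : Fin (d + 1), (i : ℕ) ≠ (j : ℕ) ∧ (i : ℕ) ≠ (j : ℕ) + 1 → A i j = 0)
    (hAsub : ∀ i j : Fin (d + 1), (i : ℕ) = (j : ℕ) + 1 → A i j ≠ 0)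
    (hAdiag : ∀ i : Fin (d + 1), A i i = θ (i : ℕ))
    -- B (playing the role of A*) is irreducible upper bidiagonal with diagonal entries θ*
    (hBup : ∀ i j : Fin (d + 1), (i : ℕ) ≠ (j : ℕ) ∧ (j : ℕ) ≠ (i : ℕ) + 1 → B i j = 0)
    (hBsup : ∀ i j : Fin (d + 1), (j : ℕ) = (i : ℕ) + 1 → B i j ≠ 0)
    (hBdiag : ∀ i : Fin (d + 1), B i i = θs (i : ℕ))
    -- distinctness
    (hθ : ∀ i ≤ d, ∀ j ≤ d, i ≠ j → θ i ≠ θ j)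
    (hθs : ∀ i ≤ d, ∀ j ≤ d, i ≠ j → θs i ≠ θs j)
    (β γ γs ϱ ϱs : ℂ)
    (hβ : ∀ i, 2 ≤ i → i ≤ d - 1 →
      β + 1 = (θ (i - 2) - θ (i + 1)) / (θ (i - 1) - θ i)
      ∧ β + 1 = (θs (i - 2) - θs (i + 1)) / (θs (i - 1) - θs i))
    (hγ : ∀ i, 1 ≤ i → i ≤ d - 1 → γ = θ (i - 1) - β * θ i + θ (i + 1))
    (hγs : ∀ i, 1 ≤ i → i ≤ d - 1 → γs = θs (i - 1) - β * θs i + θs (i + 1))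
    (hϱ : ∀ i, 1 ≤ i → i ≤ d →
      ϱ = θ (i - 1) ^ 2 - β * θ (i - 1) * θ i + θ i ^ 2 - γ * (θ (i - 1) + θ i))
    (hϱs : ∀ i, 1 ≤ i → i ≤ d →
      ϱs = θs (i - 1) ^ 2 - β * θs (i - 1) * θs i + θs i ^ 2 - γs * (θs (i - 1) + θs i))
    -- A, B form a Leonard pair with eigenvalue sequence θ and dual eigenvalue sequence θ*
    (hLP1 : ∃ T : Matrix (Fin (d + 1)) (Fin (d + 1)) ℂ, IsUnit T
      ∧ T⁻¹ * A * T = Matrix.diagonal (fun i : Fin (d + 1) => θ (i : ℕ))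
      ∧ IsIrredTridiagonal (T⁻¹ * B * T))
    (hLP2 : ∃ T : Matrix (Fin (d + 1)) (Fin (d + 1)) ℂ, IsUnit T
      ∧ IsIrredTridiagonal (T⁻¹ * A * T)
      ∧ T⁻¹ * B * T = Matrix.diagonal (fun i : Fin (d + 1) => θs (i : ℕ))) :
    A * (A ^ 2 * B - β • (A * B * A) + B * A ^ 2 - γ • (A * B + B * A) - ϱ • B)
      - (A ^ 2 * B - β • (A * B * A) + B * A ^ 2 - γ • (A * B + B * A) - ϱ • B) * A = 0
    ∧ B * (B ^ 2 * A - β • (B * A * B) + A * B ^ 2 - γs • (B * A + A * B) - ϱs • A)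
      - (B ^ 2 * A - β • (B * A * B) + A * B ^ 2 - γs • (B * A + A * B) - ϱs • A) * B = 0 :=
  stmt_19_general d θ θs A B β γ γs ϱ ϱs hϱ hϱs hLP1 hLP2
end
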